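/- arXiv:2309.00946 — 2 statements merged into one kernel-verified Lean document; each statement's English description precedes it below -/
import Mathlib

section
/- Let A[1] < ... < A[n] be n ≥ 2 distinct integers and k ≥ 1. Under the equal-length binning of [A[1], A[n]] into k bins, every bin contains at most min(n, ⌊(L/k)/G_min⌋ + 1) elements of A, where L = A[n]-A[1] and G_min is the minimum gap. Consequently if a search in a dictionary on m elements takes at most f(m) steps with f monotone nondecreasing, then a search in the binned learned dictionary (one constant-time bin lookup plus a search within the predicted bin) takes at most 1 + f(min(n, ⌊(L/k)/G_min⌋ + 1)) steps. -/
/-! A bin has width `L / k`, and consecutive keys are at least `G_min` apart, so the keys of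
one bin span at most `⌊(L / k) / G_min⌋` index steps. The only care needed is at the left end:
`A 0` is put into bin `1` by hand, and the ceiling formula puts every key `x` into a bin `β` with
`β - 1 ≤ (x - A 0) k / L ≤ β`, which is all the argument uses. -/

open Finset

def binIndex (a L : ℤ) (k : ℕ) (x : ℤ) : ℤ :=
  if x = a then 1 else ⌈(((x - a : ℤ) : ℚ) * (k : ℚ)) / ((L : ℚ))⌉

lemma binIndex_sub_one_le (a L : ℤ) (k : ℕ) (x : ℤ) :
    (binIndex a L k x : ℚ) - 1 ≤ ((x - a : ℤ) : ℚ) * k / L := by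
  unfold binIndex
  split_ifs with hx
  · simp [hx]
  · linarith [Int.ceil_lt_add_one (((x - a : ℤ) : ℚ) * k / L)]

lemma le_binIndex (a L : ℤ) (k : ℕ) (x : ℤ) :
    ((x - a : ℤ) : ℚ) * k / L ≤ binIndex a L k x := by
  unfold binIndex
  split_ifs with hx
  · simp [hx]
  · exact Int.le_ceil _

lemma sub_mul_le_of_binIndex_eq {a L : ℤ} {k : ℕ} {x y : ℤ} (hL : 0 < L)
    (hxy : binIndex a L k x = binIndex a L k y) : (y - x) * k ≤ L := by
  have hx := binIndex_sub_one_le a L k x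
  have hy := le_binIndex a L k y
  rw [hxy] at hx
  have hdiv : ((y - x : ℤ) : ℚ) * k / L ≤ 1 := by
    have : ((y - x : ℤ) : ℚ) * k / L = ((y - a : ℤ) : ℚ) * k / L - ((x - a : ℤ) : ℚ) * k / L := by
      push_cast; ring
    linarith
  rw [div_le_one (by exact_mod_cast hL)] at hdiv
  exact_mod_cast hdiv

lemma mul_le_sub_of_forall_le_gap {A : ℕ → ℤ} {n : ℕ} {g : ℤ}
    (hgap : ∀ i, i + 1 < n → g ≤ A (i + 1) - A i) {i j : ℕ} (hij : i ≤ j) (hj : j < n) :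
    ((j : ℤ) - i) * g ≤ A j - A i := by
  induction j, hij using Nat.le_induction with
  | base => simp
  | succ j hij ih =>
    have := hgap j hj
    push_cast
    linarith [ih (by omega)]

lemma card_le_of_forall_sub_le {S : Finset ℕ} {D : ℕ} (h : ∀ i ∈ S, ∀ j ∈ S, j - i ≤ D) :
    #S ≤ D + 1 := by
  rcases S.eq_empty_or_nonempty with rfl | hS
  · simp
  have hsub : S ⊆ Icc (S.min' hS) (S.max' hS) := fun x hx =>
    mem_Icc.mpr ⟨S.min'_le x hx, S.le_max' x hx⟩
  have := card_le_card hsub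
  rw [Nat.card_Icc] at this
  have := h _ (S.min'_mem hS) _ (S.max'_mem hS)
  omega

lemma le_floor_div_div_of_mul_mul_le {m g L : ℤ} {k : ℕ} (hk : 0 < k) (hg : 0 < g)
    (h : m * g * k ≤ L) : m ≤ ⌊((L : ℚ) / k) / g⌋ := by
  rw [Int.le_floor, le_div_iff₀ (by exact_mod_cast hg), le_div_iff₀ (by exact_mod_cast hk)]
  exact_mod_cast h

theorem card_filter_binIndex_eq_le {A : ℕ → ℤ} {n k : ℕ} {g L : ℤ} (hk : 0 < k) (hg : 0 < g)
    (hL : 0 < L) (hgap : ∀ i, i + 1 < n → g ≤ A (i + 1) - A i) (a b : ℤ) :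
    #{i ∈ range n | binIndex a L k (A i) = b} ≤ (⌊((L : ℚ) / k) / g⌋).toNat + 1 := by
  refine card_le_of_forall_sub_le fun i hi j hj => ?_
  simp only [mem_filter, mem_range] at hi hj
  rcases le_or_gt i j with hij | hji
  · have hspan := mul_le_sub_of_forall_le_gap hgap hij hj.1
    have hwidth := sub_mul_le_of_binIndex_eq (x := A i) (y := A j) hL (hi.2.trans hj.2.symm)
    have hsteps : ((j - i : ℕ) : ℤ) * g * k ≤ L := by
      rw [Nat.cast_sub hij]
      nlinarith
    have hfloor := le_floor_div_div_of_mul_mul_le hk hg hsteps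
    exact (Int.le_toNat (by omega)).mpr hfloor
  · omega

/-- Every bin contains at most `min(n, ⌊(L/k)/G_min⌋ + 1)` elements; hence with a
monotone search-cost function `f`, the learned-dictionary search (one bin lookup plus a search
in the predicted bin) costs at most `1 + f(min(n, ⌊(L/k)/G_min⌋ + 1))`. -/
theorem stmt3 (n k : ℕ) (hn : 2 ≤ n) (hk : 1 ≤ k) (A : ℕ → ℤ)
    (hA : ∀ i, i + 1 < n → A i < A (i + 1)) (f : ℕ → ℕ) (hf : Monotone f) :
    let G : ℕ → ℤ := fun i => A (i + 1) - A i
    let Gmin : ℤ := (Finset.range (n - 1)).inf' (Finset.nonempty_range_iff.mpr (by omega)) G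
    let L : ℤ := A (n - 1) - A 0
    let bin : ℤ → ℤ := fun x =>
      if x = A 0 then 1 else ⌈(((x - A 0 : ℤ) : ℚ) * (k : ℚ)) / ((L : ℚ))⌉
    let bound : ℕ := min n ((⌊((L : ℚ) / (k : ℚ)) / (Gmin : ℚ)⌋).toNat + 1)
    ∀ b : ℤ,
      ((Finset.range n).filter (fun i => bin (A i) = b)).card ≤ bound ∧
      1 + f (((Finset.range n).filter (fun i => bin (A i) = b)).card) ≤ 1 + f bound := by
  intro G Gmin L bin bound b
  have hGmin : 0 < Gmin := (lt_inf'_iff _).mpr fun i hi => by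
    have := hA i (by simp at hi; omega)
    simp only [G]
    omega
  have hgap : ∀ i, i + 1 < n → Gmin ≤ A (i + 1) - A i := fun i hi =>
    inf'_le G (mem_range.mpr (by omega))
  have hL : 0 < L := by
    have := mul_le_sub_of_forall_le_gap hgap (Nat.zero_le (n - 1)) (by omega)
    have : (1 : ℤ) ≤ ((n - 1 : ℕ) : ℤ) - (0 : ℕ) := by omega
    nlinarith
  have hcard : #{i ∈ range n | bin (A i) = b} ≤ bound :=
    le_min ((card_filter_le _ _).trans (card_range n).le)
      (card_filter_binIndex_eq_le (a := A 0) hk hGmin hL hgap b)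
  exact ⟨hcard, Nat.add_le_add_left (hf hcard) 1⟩
end

section
/- Suppose elements of a finite set A of size n are drawn from a universe U so that when U is divided into f_1(n) = c·n equal bins (0 < c ≤ 1 constant), each element independently lands in any fixed bin with probability at most β·f_2(n)/n where f_2(n) = (log n)^d for constants β, d. Then for n large enough, the probability that some bin contains more than e·β·(log n)^d + 2·log n elements is at most 1/n. -/
/-!
Fix a bin `b`. Its load, the number of elements landing in `b`, is a sum of `n` independent
indicators of total mean at most `M = β (log₂ n)^d`, so the Chernoff bound with parameter
`t = log 2` (for which `eᵗ - 1 = 1`) gives `P[load ≥ a] ≤ exp (M - a log 2)`. At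
`a = e M + 2 log₂ n` this is at most `1/n²` because `e log 2 ≥ 1`, and a union bound over the
`c n ≤ n` bins gives `1/n`.
-/

open MeasureTheory ProbabilityTheory Real Finset

lemma ProbabilityTheory.iIndepFun.iIndepSet_preimage {Ω ι : Type*} [MeasurableSpace Ω]
    {μ : Measure Ω} {β : ι → Type*} [∀ i, MeasurableSpace (β i)] {f : ∀ i, Ω → β i}
    (h : iIndepFun f μ) (hf : ∀ i, Measurable (f i)) {s : ∀ i, Set (β i)}
    (hs : ∀ i, MeasurableSet (s i)) :
    iIndepSet (fun i => f i ⁻¹' s i) μ :=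
  (iIndepSet_iff_meas_biInter fun i => hf i (hs i)).2 fun S =>
    h.measure_inter_preimage_eq_mul S fun i _ => hs i

lemma exp_mul_indicator_one {α : Type*} (s : Set α) (t : ℝ) (x : α) :
    exp (t * s.indicator 1 x) = 1 + s.indicator (fun _ => exp t - 1) x := by
  by_cases h : x ∈ s <;> simp [h]

section Chernoff

variable {Ω ι : Type*} [MeasurableSpace Ω] {μ : Measure Ω}

lemma integrable_exp_mul_indicator_one [IsFiniteMeasure μ] {s : Set Ω} (hs : MeasurableSet s)
    (t : ℝ) :
    Integrable (fun ω => exp (t * s.indicator 1 ω)) μ := by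
  simp_rw [exp_mul_indicator_one]
  exact (integrable_const 1).add ((integrable_const _).indicator hs)

variable [IsProbabilityMeasure μ]

lemma mgf_indicator_one {s : Set Ω} (hs : MeasurableSet s) (t : ℝ) :
    mgf (s.indicator 1) μ t = 1 + μ.real s * (exp t - 1) := by
  simp only [mgf, exp_mul_indicator_one]
  rw [integral_add (integrable_const 1) ((integrable_const _).indicator hs),
    integral_indicator_const _ hs]
  simp

lemma mgf_indicator_one_le {s : Set Ω} (hs : MeasurableSet s) (t : ℝ) :
    mgf (s.indicator 1) μ t ≤ exp (μ.real s * (exp t - 1)) := by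
  rw [mgf_indicator_one hs, add_comm]
  exact add_one_le_exp _

theorem measureReal_card_ge_le_of_iIndepSet [Fintype ι] {E : ι → Set Ω}
    [∀ i, DecidablePred (· ∈ E i)]
    (hE : ∀ i, MeasurableSet (E i)) (hind : iIndepSet E μ) {t : ℝ} (ht : 0 ≤ t) (a : ℝ) :
    μ.real {ω | a ≤ #{i | ω ∈ E i}} ≤ exp ((∑ i, μ.real (E i)) * (exp t - 1) - t * a) := by
  set Y : ι → Ω → ℝ := fun i => (E i).indicator 1
  have hY : iIndepFun Y μ := hind.iIndepFun_indicator
  have hYm : ∀ i, Measurable (Y i) := fun i => measurable_one.indicator (hE i)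
  have hcard : ∀ ω, (#{i | ω ∈ E i} : ℝ) = (∑ i, Y i) ω := by
    intro ω
    simp [Y, Finset.sum_apply, Set.indicator_apply, Finset.sum_boole]
  have hint : Integrable (fun ω => exp (t * (∑ i, Y i) ω)) μ :=
    hY.integrable_exp_mul_sum hYm fun i _ => integrable_exp_mul_indicator_one (hE i) t
  calc μ.real {ω | a ≤ #{i | ω ∈ E i}} = μ.real {ω | a ≤ (∑ i, Y i) ω} := by simp_rw [hcard]
    _ ≤ exp (-t * a) * mgf (∑ i, Y i) μ t := measure_ge_le_exp_mul_mgf a ht hint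
    _ = exp (-t * a) * ∏ i, mgf (Y i) μ t := by rw [hY.mgf_sum hYm]
    _ ≤ exp (-t * a) * ∏ i, exp (μ.real (E i) * (exp t - 1)) := by
        gcongr exp (-t * a) * ?_
        exact prod_le_prod (fun _ _ => mgf_nonneg) fun i _ => mgf_indicator_one_le (hE i) t
    _ = exp ((∑ i, μ.real (E i)) * (exp t - 1) - t * a) := by
        rw [← exp_sum, ← exp_add, ← Finset.sum_mul]
        ring_nf

theorem measureReal_load_ge_le [Fintype ι] {α : Type*} [MeasurableSpace α]
    [MeasurableSingletonClass α] [DecidableEq α] {X : ι → Ω → α} (hX : ∀ i, Measurable (X i))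
    (hind : iIndepFun X μ) {b : α} {p : ℝ} (hp : ∀ i, μ.real {ω | X i ω = b} ≤ p) (a : ℝ) :
    μ.real {ω | a ≤ #{i | X i ω = b}} ≤ exp (Fintype.card ι * p - log 2 * a) := by
  -- decide `· ∈ X i ⁻¹' {b}` by `DecidableEq α`, so that the count below is the stated one
  let (i : ι) : DecidablePred (· ∈ X i ⁻¹' {b}) := fun ω =>
    inferInstanceAs (Decidable (X i ω = b))
  have h := measureReal_card_ge_le_of_iIndepSet (fun i => hX i (measurableSet_singleton b))
    (hind.iIndepSet_preimage hX fun _ => measurableSet_singleton b) (log_nonneg one_le_two) a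
  rw [exp_log two_pos] at h
  refine (show μ.real {ω | a ≤ #{i | ω ∈ X i ⁻¹' {b}}} ≤ _ from h).trans (exp_le_exp.2 ?_)
  have hsum : ∑ i, μ.real (X i ⁻¹' {b}) ≤ Fintype.card ι * p := by
    simpa using sum_le_card_nsmul univ (fun i => μ.real (X i ⁻¹' {b})) p fun i _ => hp i
  linarith

end Chernoff

lemma exp_sub_log_two_mul_le_inv_sq {M : ℝ} (hM : 0 ≤ M) {n : ℕ} (hn : 0 < n) :
    exp (M - log 2 * (exp 1 * M + 2 * logb 2 n)) ≤ ((n : ℝ) ^ 2)⁻¹ := by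
  have hn0 : (0 : ℝ) < n := by exact_mod_cast hn
  have hlog : log 2 * logb 2 n = log n := by
    rw [logb, mul_div_cancel₀ _ (log_pos one_lt_two).ne']
  have he : 1 ≤ log 2 * exp 1 := by nlinarith [log_two_gt_d9, exp_one_gt_d9]
  calc exp (M - log 2 * (exp 1 * M + 2 * logb 2 n)) ≤ exp (-(2 * log n)) := by
        gcongr
        nlinarith
    _ = ((n : ℝ) ^ 2)⁻¹ := by
        rw [exp_neg, two_mul, exp_add, exp_log hn0, sq]

theorem stmt8_general (β : ℝ) (hβ : 0 < β) (d : ℕ) (c : ℝ) (hc1 : c ≤ 1) :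
    ∃ n₀ : ℕ, ∀ n : ℕ, n₀ ≤ n →
      ∀ (Ω : Type) (_ : MeasurableSpace Ω) (μ : Measure Ω), IsProbabilityMeasure μ →
      ∀ (K : ℕ), (K : ℝ) = c * n →
      ∀ (X : Fin n → Ω → Fin K), (∀ i, Measurable (X i)) →
      iIndepFun X μ →
      (∀ (i : Fin n) (b : Fin K),
          μ {ω | X i ω = b} ≤ ENNReal.ofReal (β * (Real.logb 2 n) ^ d / n)) →
      μ {ω | ∃ b : Fin K,
          Real.exp 1 * β * (Real.logb 2 n) ^ d + 2 * Real.logb 2 n <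
            ((Finset.univ.filter (fun i => X i ω = b)).card : ℝ)} ≤ (1 : ENNReal) / n := by
  refine ⟨1, fun n hn Ω _ μ _ K hK X hX hInd hprob => ?_⟩
  have hn0 : (0 : ℝ) < n := by exact_mod_cast hn
  set L := logb 2 n
  set M := β * L ^ d
  have hM : 0 ≤ M :=
    mul_nonneg hβ.le (pow_nonneg (logb_nonneg one_lt_two (by exact_mod_cast hn)) d)
  have hbin : ∀ b : Fin K,
      μ.real {ω | exp 1 * M + 2 * L ≤ #{i | X i ω = b}} ≤ ((n : ℝ) ^ 2)⁻¹ := fun b =>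
    calc _ ≤ exp (n * (M / n) - log 2 * (exp 1 * M + 2 * L)) := by
          simpa using measureReal_load_ge_le hX hInd
            (fun i => ENNReal.toReal_le_of_le_ofReal (by positivity) (hprob i b)) _
      _ ≤ ((n : ℝ) ^ 2)⁻¹ := by
          rw [mul_div_cancel₀ _ hn0.ne']
          exact exp_sub_log_two_mul_le_inv_sq hM hn
  have hunion : μ.real {ω | ∃ b : Fin K, exp 1 * β * L ^ d + 2 * L < #{i | X i ω = b}} ≤ 1 / n :=
    calc _ ≤ μ.real (⋃ b : Fin K, {ω | exp 1 * M + 2 * L ≤ #{i | X i ω = b}}) :=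
          measureReal_mono <| by
            rintro ω ⟨b, hb⟩
            exact Set.mem_iUnion.2 ⟨b, by rw [← mul_assoc]; exact hb.le⟩
      _ ≤ ∑ _b : Fin K, ((n : ℝ) ^ 2)⁻¹ :=
          (measureReal_iUnion_fintype_le _).trans (sum_le_sum fun b _ => hbin b)
      _ = c / n := by
          simp only [sum_const, card_univ, Fintype.card_fin, nsmul_eq_mul, hK]
          field_simp
      _ ≤ 1 / n := by gcongr
  calc _ = ENNReal.ofReal (μ.real _) := (ofReal_measureReal (measure_ne_top _ _)).symm
    _ ≤ ENNReal.ofReal (1 / n) := ENNReal.ofReal_le_ofReal hunion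
    _ = (1 : ENNReal) / n := by
        rw [ENNReal.ofReal_div_of_pos hn0, ENNReal.ofReal_one, ENNReal.ofReal_natCast]

/-- balls into bins under a smooth distribution: if each of `n` independent
elements lands in any fixed one of `K = c·n` bins with probability at most `β·(log₂ n)^d / n`,
then for `n` large enough, with probability at least `1 - 1/n` no bin receives more than
`e·β·(log₂ n)^d + 2·log₂ n` elements. -/
theorem stmt8 (β : ℝ) (hβ : 0 < β) (d : ℕ) (c : ℝ) (hc : 0 < c) (hc1 : c ≤ 1) :
    ∃ n₀ : ℕ, ∀ n : ℕ, n₀ ≤ n →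
      ∀ (Ω : Type) (_ : MeasurableSpace Ω) (μ : Measure Ω), IsProbabilityMeasure μ →
      ∀ (K : ℕ), (K : ℝ) = c * n →
      ∀ (X : Fin n → Ω → Fin K), (∀ i, Measurable (X i)) →
      iIndepFun X μ →
      (∀ (i : Fin n) (b : Fin K),
          μ {ω | X i ω = b} ≤ ENNReal.ofReal (β * (Real.logb 2 n) ^ d / n)) →
      μ {ω | ∃ b : Fin K,
          Real.exp 1 * β * (Real.logb 2 n) ^ d + 2 * Real.logb 2 n <
            ((Finset.univ.filter (fun i => X i ω = b)).card : ℝ)} ≤ (1 : ENNReal) / n :=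
  stmt8_general β hβ d c hc1
end
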